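/- arXiv:2412.16445 — 3 statements merged into one kernel-verified Lean document; each statement's English description precedes it below -/
import Mathlib

section
/- The first-order SAV scheme (u^{n+1}−u^n)/τ = −μ^{n+1}, μ^{n+1} = γL u^{n+1} + (r^{n+1}/√(ε₁[u^n])) ε₁'(u^n), r^{n+1}−r^n = (1/(2√(ε₁[u^n]))) ∫ ε₁'(u^n)(u^{n+1}−u^n) dx is unconditionally energy stable: for any τ > 0, defining E^n = (γ/2)(u^n, Lu^n) + (r^n)², one has E^{n+1} − E^n = −τ‖μ^{n+1}‖² − (γ/2)(u^{n+1}−u^n, L(u^{n+1}−u^n)) − (r^{n+1}−r^n)² ≤ 0. -/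
open RealInnerProductSpace

/-- The first-order SAV scheme is unconditionally energy stable: for any τ > 0,
with Eⁿ = (γ/2)(uⁿ, Luⁿ) + (rⁿ)²,
E^{n+1} − Eⁿ = −τ‖μ^{n+1}‖² − (γ/2)(u^{n+1}−uⁿ, L(u^{n+1}−uⁿ)) − (r^{n+1}−rⁿ)² ≤ 0. -/
theorem sav_first_order_energy_stable
    {H : Type*} [NormedAddCommGroup H] [InnerProductSpace ℝ H] [CompleteSpace H]
    (L : H →L[ℝ] H)
    (hLsym : ∀ x y, ⟪L x, y⟫ = ⟪x, L y⟫)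
    (hLpos : ∀ x, 0 ≤ ⟪L x, x⟫)
    (γ τ : ℝ) (hγ : 0 < γ) (hτ : 0 < τ)
    (e₁ : ℝ) (he₁ : 0 < e₁)   -- ε₁[uⁿ]
    (g : H)                    -- ε₁'(uⁿ)
    (un un1 μ : H) (rn rn1 : ℝ)
    (h1 : un1 - un = -(τ • μ))
    (h2 : μ = γ • L un1 + (rn1 / Real.sqrt e₁) • g)
    (h3 : rn1 - rn = (1 / (2 * Real.sqrt e₁)) * ⟪g, un1 - un⟫) :
    ((γ / 2) * ⟪un1, L un1⟫ + rn1 ^ 2) - ((γ / 2) * ⟪un, L un⟫ + rn ^ 2) =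
      -(τ * ‖μ‖ ^ 2) - (γ / 2) * ⟪un1 - un, L (un1 - un)⟫ - (rn1 - rn) ^ 2 ∧
    -(τ * ‖μ‖ ^ 2) - (γ / 2) * ⟪un1 - un, L (un1 - un)⟫ - (rn1 - rn) ^ 2 ≤ 0 := by
  have hs : Real.sqrt e₁ ≠ 0 := ne_of_gt (Real.sqrt_pos.mpr he₁)
  have key : ⟪un1 - un, μ⟫ = -(τ * ‖μ‖ ^ 2) := by
    rw [h1]
    simp [inner_neg_left, real_inner_smul_left, real_inner_self_eq_norm_sq]
  have hsym : ⟪un1, L un⟫ = ⟪un, L un1⟫ := by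
    rw [real_inner_comm, hLsym]
  have expand : ⟪un1, L un1⟫ - ⟪un, L un⟫ =
      2 * ⟪un1 - un, L un1⟫ - ⟪un1 - un, L (un1 - un)⟫ := by
    simp only [map_sub, inner_sub_left, inner_sub_right]
    rw [hsym]
    ring
  have h2' : ⟪un1 - un, μ⟫ = γ * ⟪un1 - un, L un1⟫ + (rn1 / Real.sqrt e₁) * ⟪un1 - un, g⟫ := by
    rw [h2, inner_add_right, real_inner_smul_right, real_inner_smul_right]
  have hr : (rn1 / Real.sqrt e₁) * ⟪un1 - un, g⟫ = 2 * rn1 * (rn1 - rn) := by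
    rw [h3, real_inner_comm]
    field_simp
  have hLd : 0 ≤ ⟪un1 - un, L (un1 - un)⟫ := by
    rw [← hLsym]; exact hLpos _
  constructor
  · linear_combination (γ / 2) * expand + key - h2' - hr
  · have hp : 0 ≤ τ * ‖μ‖ ^ 2 := by positivity
    nlinarith [mul_nonneg (by linarith : (0:ℝ) ≤ γ / 2) hLd, sq_nonneg (rn1 - rn)]
end

section
/- The second-order (Crank–Nicolson) SAV scheme (u^{n+1}−u^n)/τ = −μ^{n+1/2}, μ^{n+1/2} = γL[(u^n+u^{n+1})/2] + ((r^{n+1}+r^n)/(2√(ε₁[ũ]))) ε₁'(ũ), r^{n+1}−r^n = ∫ (ε₁'(ũ)/(2√(ε₁[ũ])))(u^{n+1}−u^n) dx, with ũ any fixed function, satisfies for every τ > 0 the exact energy identity (1/τ)(E^{n+1} − E^n) = −‖μ^{n+1/2}‖²_{L²} ≤ 0, where E^n = (γ/2)(u^n, Lu^n) + (r^n)². -/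
open RealInnerProductSpace

/-- The second-order (Crank–Nicolson) SAV scheme satisfies, for every τ > 0, the
exact energy identity (1/τ)(E^{n+1} − Eⁿ) = −‖μ^{n+1/2}‖² ≤ 0, where
Eⁿ = (γ/2)(uⁿ, Luⁿ) + (rⁿ)². -/
theorem sav_second_order_energy_stable
    {H : Type*} [NormedAddCommGroup H] [InnerProductSpace ℝ H] [CompleteSpace H]
    (L : H →L[ℝ] H)
    (hLsym : ∀ x y, ⟪L x, y⟫ = ⟪x, L y⟫)
    (hLpos : ∀ x, 0 ≤ ⟪L x, x⟫)
    (γ τ : ℝ) (hγ : 0 < γ) (hτ : 0 < τ)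
    (e₁ : ℝ) (he₁ : 0 < e₁)   -- ε₁[ũ^{n+1/2}]
    (g : H)                    -- ε₁'(ũ^{n+1/2})
    (un un1 μ : H) (rn rn1 : ℝ)
    (h1 : un1 - un = -(τ • μ))
    (h2 : μ = γ • L ((1 / 2 : ℝ) • (un + un1)) +
              ((rn1 + rn) / (2 * Real.sqrt e₁)) • g)
    (h3 : rn1 - rn = (1 / (2 * Real.sqrt e₁)) * ⟪g, un1 - un⟫) :
    (1 / τ) * (((γ / 2) * ⟪un1, L un1⟫ + rn1 ^ 2) -
               ((γ / 2) * ⟪un, L un⟫ + rn ^ 2)) = -‖μ‖ ^ 2 ∧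
    -‖μ‖ ^ 2 ≤ 0 := by
  have hs : Real.sqrt e₁ ≠ 0 := ne_of_gt (Real.sqrt_pos.mpr he₁)
  -- cross term identity from symmetry
  have hcross : ⟪L un, un1⟫ = ⟪L un1, un⟫ := by
    rw [hLsym un un1, real_inner_comm]
  -- expand ⟪μ, un1 - un⟫ via h2
  have hg : ⟪g, un1 - un⟫ = 2 * Real.sqrt e₁ * (rn1 - rn) := by
    field_simp at h3
    linarith
  have hL : ⟪L ((1 / 2 : ℝ) • (un + un1)), un1 - un⟫
      = (1 / 2) * (⟪un1, L un1⟫ - ⟪un, L un⟫) := by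
    rw [map_smul]
    simp only [ContinuousLinearMap.coe_smul', Pi.smul_apply, map_add,
      real_inner_smul_left, inner_add_left, inner_sub_right]
    rw [hcross, ← hLsym un un, ← hLsym un1 un1]
    ring
  have key : ⟪μ, un1 - un⟫
      = (γ / 2) * (⟪un1, L un1⟫ - ⟪un, L un⟫) + (rn1 ^ 2 - rn ^ 2) := by
    rw [h2, inner_add_left, real_inner_smul_left, real_inner_smul_left, hL, hg]
    field_simp
    ring
  have hnorm : ⟪μ, un1 - un⟫ = -(τ * ‖μ‖ ^ 2) := by
    rw [h1, inner_neg_right, real_inner_smul_right, real_inner_self_eq_norm_sq]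
  constructor
  · rw [key] at hnorm
    field_simp
    nlinarith [hnorm]
  · nlinarith [sq_nonneg ‖μ‖]
end

section
/- For a symmetric negative semidefinite matrix D with strictly negative trace, the matrix Q = (I − 2τD)^{-1} (τ>0) has all eigenvalues in (0,1], and at least one eigenvalue strictly less than 1; if additionally D is irreducible with zero row sums (so 0 is a simple eigenvalue with constant eigenvector), then Q has spectral radius 1 attained only on constants, and Q contracts the orthogonal complement of constants with factor L < 1. -/
open Matrix BigOperators

/-- For D symmetric negative semidefinite with strictly negative trace and τ > 0,
Q = (I − 2τD)⁻¹ has all eigenvalues in (0,1] and at least one eigenvalue < 1.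
If additionally D is irreducible with zero row sums — so that 0 is a simple
eigenvalue of D with constant eigenvector — then Q fixes constants (spectral
radius 1 attained only on constants: Qv = v forces v constant) and contracts the
orthogonal complement of the constants with some factor L < 1. -/
theorem aos_update_matrix_contraction
    (N : ℕ) (D : Matrix (Fin N) (Fin N) ℝ)
    (hsym : D.IsSymm) (hnsd : (-D).PosSemidef) (htr : D.trace < 0)
    (τ : ℝ) (hτ : 0 < τ)
    (Q : Matrix (Fin N) (Fin N) ℝ) (hQ : Q = (1 - (2 * τ) • D)⁻¹) :
    ((∀ (μ : ℝ) (v : Fin N → ℝ), v ≠ 0 → Q.mulVec v = μ • v → 0 < μ ∧ μ ≤ 1) ∧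
     (∃ (μ : ℝ) (v : Fin N → ℝ), v ≠ 0 ∧ Q.mulVec v = μ • v ∧ μ < 1)) ∧
    (((∀ i : Fin N, ∑ j, D i j = 0) ∧
      (∀ v : Fin N → ℝ, D.mulVec v = 0 → ∃ c : ℝ, v = fun _ => c)) →
      (Q.mulVec (fun _ => (1 : ℝ)) = fun _ => (1 : ℝ)) ∧
      (∀ v : Fin N → ℝ, Q.mulVec v = v → ∃ c : ℝ, v = fun _ => c) ∧
      (∃ L : ℝ, 0 ≤ L ∧ L < 1 ∧
        ∀ v : Fin N → ℝ, (∑ i, v i = 0) →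
          ∑ i, (Q.mulVec v i) ^ 2 ≤ L ^ 2 * ∑ i, (v i) ^ 2)) := by
  classical
  set A : Matrix (Fin N) (Fin N) ℝ := 1 - (2 * τ) • D with hAdef
  -- basic facts about A
  have hA_mulVec : ∀ v : Fin N → ℝ, A *ᵥ v = v - (2 * τ) • (D *ᵥ v) := by
    intro v
    rw [hAdef, sub_mulVec, smul_mulVec, one_mulVec]
  have hdots : ∀ v : Fin N → ℝ, 0 ≤ v ⬝ᵥ v := by
    intro v
    exact Finset.sum_nonneg fun i _ => mul_self_nonneg _
  have hdotpos : ∀ v : Fin N → ℝ, v ≠ 0 → 0 < v ⬝ᵥ v := by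
    intro v hv
    rcases (hdots v).lt_or_eq with h | h
    · exact h
    · exfalso; exact hv (by simpa using (dotProduct_self_eq_zero.mp h.symm))
  have hkey : ∀ v : Fin N → ℝ, v ⬝ᵥ v ≤ v ⬝ᵥ (A *ᵥ v) := by
    intro v
    have h1 : v ⬝ᵥ (A *ᵥ v) = v ⬝ᵥ v + (2 * τ) * (v ⬝ᵥ ((-D) *ᵥ v)) := by
      rw [hA_mulVec]
      have : v - (2 * τ) • (D *ᵥ v) = v + (2 * τ) • ((-D) *ᵥ v) := by
        rw [neg_mulVec, smul_neg, sub_eq_add_neg]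
      rw [this, dotProduct_add, dotProduct_smul, smul_eq_mul]
    have h2 : 0 ≤ v ⬝ᵥ ((-D) *ᵥ v) := by simpa using hnsd.dotProduct_mulVec_nonneg v
    nlinarith
  have hAsymm : A.IsHermitian := by
    have : Aᵀ = A := by
      rw [hAdef, transpose_sub, transpose_smul, transpose_one, hsym]
    simpa [Matrix.IsHermitian, Matrix.conjTranspose_eq_transpose_of_trivial] using this
  have hApd : A.PosDef := by
    refine .of_dotProduct_mulVec_pos hAsymm (fun x hx => ?_)
    have := lt_of_lt_of_le (hdotpos x hx) (hkey x)
    simpa using this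
  have hdet : IsUnit A.det := isUnit_iff_ne_zero.mpr (ne_of_gt hApd.det_pos)
  have hQA : Q * A = 1 := by rw [hQ]; exact Matrix.nonsing_inv_mul A hdet
  have hAQ : A * Q = 1 := by rw [hQ]; exact Matrix.mul_nonsing_inv A hdet
  have hQAv : ∀ v : Fin N → ℝ, Q *ᵥ (A *ᵥ v) = v := by
    intro v; rw [mulVec_mulVec, hQA, one_mulVec]
  have hAQv : ∀ v : Fin N → ℝ, A *ᵥ (Q *ᵥ v) = v := by
    intro v; rw [mulVec_mulVec, hAQ, one_mulVec]
  -- eigen machinery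
  set α : Fin N → ℝ := hAsymm.eigenvalues with hαdef
  set u : Fin N → Fin N → ℝ :=
    fun i => (WithLp.equiv 2 (Fin N → ℝ)) (hAsymm.eigenvectorBasis i) with hudef
  have hAu : ∀ i, A *ᵥ u i = α i • u i := fun i => hAsymm.mulVec_eigenvectorBasis i
  have hune : ∀ i, u i ≠ 0 := by
    intro i h
    exact hAsymm.eigenvectorBasis.orthonormal.ne_zero i (by
      apply (WithLp.equiv 2 (Fin N → ℝ)).injective
      simpa [hudef] using h)
  have horth : ∀ i j, u i ⬝ᵥ u j = if i = j then 1 else 0 := by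
    intro i j
    have h := orthonormal_iff_ite.mp hAsymm.eigenvectorBasis.orthonormal i j
    rw [EuclideanSpace.inner_eq_star_dotProduct, dotProduct_comm] at h
    simpa [hudef, star_trivial] using h
  have hα1 : ∀ i, 1 ≤ α i := by
    intro i
    have h1 := hkey (u i)
    rw [hAu i, dotProduct_smul, smul_eq_mul] at h1
    have h2 : 0 < u i ⬝ᵥ u i := hdotpos _ (hune i)
    nlinarith
  have hQu : ∀ i, Q *ᵥ u i = (α i)⁻¹ • u i := by
    intro i
    have h0 : (0:ℝ) < α i := lt_of_lt_of_le one_pos (hα1 i)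
    have h1 : Q *ᵥ (A *ᵥ u i) = u i := hQAv (u i)
    rw [hAu i, mulVec_smul] at h1
    have := congrArg (fun w => (α i)⁻¹ • w) h1
    simpa [smul_smul, inv_mul_cancel₀ (ne_of_gt h0)] using this
  -- trace facts
  have htraceA : A.trace = ∑ i, α i := by
    have h := hAsymm.spectral_theorem
    calc A.trace = ((hAsymm.eigenvectorUnitary : Matrix (Fin N) (Fin N) ℝ) *
          Matrix.diagonal (RCLike.ofReal ∘ α) *
          (star (hAsymm.eigenvectorUnitary : Matrix (Fin N) (Fin N) ℝ))).trace := by rw [Unitary.conjStarAlgAut_apply] at h; rw [← h]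
      _ = ((star (hAsymm.eigenvectorUnitary : Matrix (Fin N) (Fin N) ℝ)) *
          (hAsymm.eigenvectorUnitary : Matrix (Fin N) (Fin N) ℝ) *
          Matrix.diagonal (RCLike.ofReal ∘ α)).trace := by rw [Matrix.trace_mul_cycle]
      _ = (Matrix.diagonal (RCLike.ofReal ∘ α)).trace := by
          rw [Unitary.coe_star_mul_self, one_mul]
      _ = ∑ i, α i := by simp [Matrix.trace_diagonal]
  have htraceA' : (N : ℝ) < A.trace := by
    rw [hAdef, Matrix.trace_sub, Matrix.trace_smul, Matrix.trace_one]
    have : 0 < -((2 * τ) • D.trace) := by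
      simp only [smul_eq_mul]
      nlinarith
    simp only [Fintype.card_fin] at *
    linarith [this]
  obtain ⟨i₀, hi₀⟩ : ∃ i, 1 < α i := by
    by_contra hcon
    push_neg at hcon
    have : ∑ i, α i ≤ ∑ _i : Fin N, (1:ℝ) :=
      Finset.sum_le_sum fun i _ => hcon i
    simp only [Finset.sum_const, Finset.card_univ, Fintype.card_fin, nsmul_eq_mul, mul_one] at this
    rw [htraceA] at htraceA'
    linarith
  constructor
  · constructor
    · -- all eigenvalues of Q in (0,1]
      intro μ v hv hev
      have h1 : A *ᵥ (μ • v) = v := by rw [← hev]; exact hAQv v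
      rw [mulVec_smul] at h1
      have hμ0 : μ ≠ 0 := by
        rintro rfl
        rw [zero_smul] at h1
        exact hv h1.symm
      have hAv : A *ᵥ v = μ⁻¹ • v := by
        have := congrArg (fun w => μ⁻¹ • w) h1
        simpa [smul_smul, inv_mul_cancel₀ hμ0] using this
      have h2 := hkey v
      rw [hAv, dotProduct_smul, smul_eq_mul] at h2
      have h3 : 0 < v ⬝ᵥ v := hdotpos v hv
      have h4 : 1 ≤ μ⁻¹ := by nlinarith
      have h5 : 0 < μ := by
        by_contra hle
        push_neg at hle
        have : μ⁻¹ ≤ 0 := inv_nonpos.mpr hle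
        linarith
      refine ⟨h5, ?_⟩
      have := mul_le_mul_of_nonneg_left h4 (le_of_lt h5)
      rw [mul_one, mul_inv_cancel₀ hμ0] at this
      linarith
    · -- existence of eigenvalue < 1
      exact ⟨(α i₀)⁻¹, u i₀, hune i₀, hQu i₀,
        inv_lt_one_of_one_lt₀ hi₀⟩
  · rintro ⟨hrow, hker⟩
    have hD1 : D *ᵥ (fun _ => (1:ℝ)) = 0 := by
      funext i
      simpa [Matrix.mulVec, dotProduct] using hrow i
    have hA1 : A *ᵥ (fun _ => (1:ℝ)) = fun _ => (1:ℝ) := by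
      rw [hA_mulVec, hD1, smul_zero, sub_zero]
    have hfix : ∀ v : Fin N → ℝ, A *ᵥ v = v → ∃ c, v = fun _ => c := by
      intro v hAv
      rw [hA_mulVec] at hAv
      have h1 : (2 * τ) • (D *ᵥ v) = 0 := by
        have := congrArg (fun w => v - w) hAv
        simp only [sub_sub_cancel] at this
        simpa using this
      have h2 : D *ᵥ v = 0 := by
        rcases smul_eq_zero.mp h1 with h | h
        · exfalso; nlinarith
        · exact h
      exact hker v h2
    refine ⟨by have h := hQAv (fun _ => (1:ℝ)); rwa [hA1] at h, ?_, ?_⟩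
    · intro v hQv
      apply hfix
      have := hAQv v
      rwa [hQv] at this
    · -- the contraction factor
      have hi₀mem : i₀ ∈ Finset.univ.filter (fun i => 1 < α i) := by
        simp [hi₀]
      have hne : (Finset.univ.filter (fun i => 1 < α i)).Nonempty := ⟨i₀, hi₀mem⟩
      set L : ℝ := (Finset.univ.filter (fun i => 1 < α i)).sup' hne (fun i => (α i)⁻¹)
        with hLdef
      have hL0 : 0 ≤ L := by
        refine le_trans ?_ (Finset.le_sup' (fun i => (α i)⁻¹) hi₀mem)
        positivity
      have hL1 : L < 1 := by
        rw [hLdef, Finset.sup'_lt_iff]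
        intro i hi
        exact inv_lt_one_of_one_lt₀ (Finset.mem_filter.mp hi).2
      refine ⟨L, hL0, hL1, ?_⟩
      intro v hsum
      -- expansion helpers
      have hdot_sum : ∀ (w : Fin N → ℝ) (f : Fin N → Fin N → ℝ),
          w ⬝ᵥ (∑ i, f i) = ∑ i, w ⬝ᵥ f i := by
        intro w f
        simp only [dotProduct, Finset.sum_apply, Finset.mul_sum]
        exact Finset.sum_comm
      have hsum_dot : ∀ (w : Fin N → ℝ) (f : Fin N → Fin N → ℝ),
          (∑ i, f i) ⬝ᵥ w = ∑ i, f i ⬝ᵥ w := by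
        intro w f
        simp only [dotProduct, Finset.sum_apply, Finset.sum_mul]
        exact Finset.sum_comm
      -- Parseval-type identity
      have hpars : ∀ e : Fin N → ℝ, (∑ i, e i • u i) ⬝ᵥ (∑ i, e i • u i) = ∑ i, (e i)^2 := by
        intro e
        rw [hsum_dot]
        refine Finset.sum_congr rfl fun i _ => ?_
        rw [smul_dotProduct, hdot_sum, smul_eq_mul]
        have : ∀ j, u i ⬝ᵥ e j • u j = if i = j then e j else 0 := by
          intro j
          rw [dotProduct_smul, smul_eq_mul, horth i j]
          by_cases h : i = j <;> simp [h]
        rw [Finset.sum_congr rfl fun j _ => this j]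
        simp [Finset.sum_ite_eq, sq]
      -- coefficients
      set c : Fin N → ℝ := fun i => u i ⬝ᵥ v with hcdef
      have hv_expand : v = ∑ i, c i • u i := by
        have h := (hAsymm.eigenvectorBasis.sum_repr ((WithLp.equiv 2 (Fin N → ℝ)).symm v)).symm
        have h2 : ∀ i, hAsymm.eigenvectorBasis.repr ((WithLp.equiv 2 (Fin N → ℝ)).symm v) i = c i := by
          intro i
          rw [OrthonormalBasis.repr_apply_apply, EuclideanSpace.inner_eq_star_dotProduct]
          simp [hcdef, hudef, star_trivial]
          exact dotProduct_comm _ _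
        calc v = (WithLp.equiv 2 (Fin N → ℝ)) ((WithLp.equiv 2 (Fin N → ℝ)).symm v) := rfl
          _ = (WithLp.equiv 2 (Fin N → ℝ))
              (∑ i, hAsymm.eigenvectorBasis.repr ((WithLp.equiv 2 (Fin N → ℝ)).symm v) i •
                hAsymm.eigenvectorBasis i) := by rw [← h]
          _ = ∑ i, c i • u i := by
              simp only [← h2]
              simp [hudef]
      -- coefficients on eigenvalue-1 eigenvectors vanish
      have hc_zero : ∀ i, α i = 1 → c i = 0 := by
        intro i hαi
        have hAui : A *ᵥ u i = u i := by rw [hAu i, hαi, one_smul]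
        obtain ⟨d, hd⟩ := hfix (u i) hAui
        rw [hcdef]
        simp only [hd]
        calc (fun _ => d) ⬝ᵥ v = ∑ j, d * v j := rfl
          _ = d * ∑ j, v j := by rw [Finset.mul_sum]
          _ = 0 := by rw [hsum, mul_zero]
      -- expansion of Q *ᵥ v
      have hQv_expand : Q *ᵥ v = ∑ i, (c i * (α i)⁻¹) • u i := by
        rw [hv_expand]
        have : Q *ᵥ (∑ i, c i • u i) = ∑ i, Q *ᵥ (c i • u i) := by
          rw [show (Q *ᵥ ∑ i, c i • u i) = Q.mulVecLin (∑ i, c i • u i) from rfl, map_sum]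
          rfl
        rw [this]
        refine Finset.sum_congr rfl fun i _ => ?_
        rw [mulVec_smul, hQu i, smul_smul]
      -- final computation
      have e1 : ∑ i, (Q.mulVec v i)^2 = ∑ i, (c i * (α i)⁻¹)^2 := by
        have := hpars (fun i => c i * (α i)⁻¹)
        rw [← hQv_expand] at this
        rw [← this]
        simp [dotProduct, sq]
      have e2 : ∑ i, (v i)^2 = ∑ i, (c i)^2 := by
        have := hpars c
        rw [← hv_expand] at this
        rw [← this]
        simp [dotProduct, sq]
      rw [e1, e2, Finset.mul_sum]
      refine Finset.sum_le_sum fun i _ => ?_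
      by_cases h : 1 < α i
      · have hle : (α i)⁻¹ ≤ L :=
          Finset.le_sup' (fun i => (α i)⁻¹) (by simp [h])
        have hpos : 0 ≤ (α i)⁻¹ := by positivity
        calc (c i * (α i)⁻¹)^2 = ((α i)⁻¹)^2 * (c i)^2 := by ring
          _ ≤ L^2 * (c i)^2 := by
              apply mul_le_mul_of_nonneg_right _ (sq_nonneg _)
              exact pow_le_pow_left₀ hpos hle 2
      · have hαi : α i = 1 := le_antisymm (not_lt.mp h) (hα1 i)
        rw [hc_zero i hαi]
        simp [sq_nonneg]
end
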